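/- Let ζ = exp(2πi/3), let J₁ ∈ SU(3) be the cyclic permutation matrix with (J₁)₂₁ = (J₁)₃₂ = (J₁)₁₃ = 1 and all other entries 0, and let J₂ = diag(1, ζ, ζ²) ∈ SU(3). If A, B ∈ SU(3) satisfy B·A·B⁻¹·A⁻¹ = ζ·I, then there exists P ∈ SU(3) such that P·A·P⁻¹ = J₁ and P·B·P⁻¹ = J₂. -/
import Mathlib

open Matrix

private lemma ip_unitary (M : Matrix (Fin 3) (Fin 3) ℂ) (hM : Mᴴ * M = 1)
    (x y : Fin 3 → ℂ) : star (M *ᵥ x) ⬝ᵥ (M *ᵥ y) = star x ⬝ᵥ y := by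
  rw [Matrix.star_mulVec, Matrix.dotProduct_mulVec, Matrix.vecMul_vecMul, hM, Matrix.vecMul_one]

private lemma ip_orth (M : Matrix (Fin 3) (Fin 3) ℂ) (hM : Mᴴ * M = 1)
    (x y : Fin 3 → ℂ) (α β : ℂ) (hx : M *ᵥ x = α • x) (hy : M *ᵥ y = β • y)
    (hαβ : star α * β ≠ 1) : star x ⬝ᵥ y = 0 := by
  have h := ip_unitary M hM x y
  rw [hx, hy] at h
  simp only [star_smul, smul_dotProduct, dotProduct_smul, smul_eq_mul] at h
  have h2 : (star α * β - 1) * (star x ⬝ᵥ y) = 0 := by ring_nf; linear_combination h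
  rcases mul_eq_zero.mp h2 with h3 | h3
  · exact absurd (by linear_combination h3) hαβ
  · exact h3

private lemma sandwich_apply (v : Fin 3 → Fin 3 → ℂ) (M : Matrix (Fin 3) (Fin 3) ℂ) (j k : Fin 3) :
    ((Matrix.of fun j i => star (v j i)) * M * (Matrix.of fun j i => star (v j i))ᴴ) j k
      = star (v j) ⬝ᵥ (M *ᵥ v k) := by
  simp [Matrix.mul_apply, Matrix.conjTranspose_apply, Matrix.mulVec, dotProduct,
    Fin.sum_univ_three, Pi.star_apply]
  ring

/-- Let `ζ = exp(2πi/3)`, let `J₁` be the cyclic permutation matrix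
(`(J₁)₂₁ = (J₁)₃₂ = (J₁)₁₃ = 1`, all other entries `0`) and `J₂ = diag(1, ζ, ζ²)`.
If `A, B` are 3×3 complex unitary matrices of determinant 1 with
`B·A·B⁻¹·A⁻¹ = ζ·I`, then there is `P ∈ SU(3)` with `P·A·P⁻¹ = J₁` and `P·B·P⁻¹ = J₂`. -/
theorem stmt12 (ζ : ℂ) (hζ : ζ = Complex.exp (2 * (Real.pi : ℂ) * Complex.I / 3))
    (A B : Matrix (Fin 3) (Fin 3) ℂ)
    (hAu : Aᴴ * A = 1) (hAd : A.det = 1)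
    (hBu : Bᴴ * B = 1) (hBd : B.det = 1)
    (hcomm : B * A * B⁻¹ * A⁻¹ = ζ • (1 : Matrix (Fin 3) (Fin 3) ℂ)) :
    ∃ P : Matrix (Fin 3) (Fin 3) ℂ, Pᴴ * P = 1 ∧ P.det = 1 ∧
      P * A * P⁻¹ = !![0, 0, 1; 1, 0, 0; 0, 1, 0] ∧
      P * B * P⁻¹ = !![1, 0, 0; 0, ζ, 0; 0, 0, ζ ^ 2] := by
  have hζ3 : ζ ^ 3 = 1 := by
    rw [hζ, ← Complex.exp_nat_mul]
    rw [show ((3:ℕ) : ℂ) * (2 * (Real.pi : ℂ) * Complex.I / 3) = 2 * (Real.pi : ℂ) * Complex.I by push_cast; ring]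
    exact Complex.exp_two_pi_mul_I
  have hζ0 : ζ ≠ 0 := by rw [hζ]; exact Complex.exp_ne_zero _
  have hne2pi : (2 * (Real.pi : ℂ) * Complex.I) ≠ 0 := by
    simp [Real.pi_ne_zero, Complex.I_ne_zero, Complex.ofReal_ne_zero]
  have hζne1 : ζ ≠ 1 := by
    intro h
    rw [hζ, Complex.exp_eq_one_iff] at h
    obtain ⟨n, hn⟩ := h
    have h1 : (3 * (n:ℂ) - 1) * (2 * (Real.pi : ℂ) * Complex.I) = 0 := by linear_combination (-3 : ℂ) * hn
    have h2 : (3 * (n:ℂ) - 1) = 0 := by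
      rcases mul_eq_zero.mp h1 with h | h
      · exact h
      · exact absurd h hne2pi
    have h3 : ((3 * n - 1 : ℤ) : ℂ) = 0 := by push_cast; linear_combination h2
    have h4 : (3 * n - 1 : ℤ) = 0 := by exact_mod_cast h3
    omega
  have hζ2ne1 : ζ ^ 2 ≠ 1 := by
    intro h
    exact hζne1 (by linear_combination hζ3 - ζ * h)
  have hζstar : star ζ = ζ ^ 2 := by
    have hs : star ζ = Complex.exp (star (2 * (Real.pi : ℂ) * Complex.I / 3)) := by
      rw [hζ, Complex.star_def, ← Complex.exp_conj]
    have h1 : star ζ * ζ = 1 := by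
      rw [hs, hζ, ← Complex.exp_add,
        show star (2 * (Real.pi : ℂ) * Complex.I / 3) + 2 * (Real.pi : ℂ) * Complex.I / 3 = 0 by
          simp [Complex.star_def, map_div₀, _root_.map_mul, Complex.conj_I, Complex.conj_ofReal]; ring]
      exact Complex.exp_zero
    have h2 : ζ ^ 2 * ζ = 1 := by linear_combination hζ3
    exact mul_right_cancel₀ hζ0 (h1.trans h2.symm)
  -- inverses
  have hAinv : A⁻¹ = Aᴴ := Matrix.inv_eq_left_inv hAu
  have hBinv : B⁻¹ = Bᴴ := Matrix.inv_eq_left_inv hBu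
  have hAAi : A * A⁻¹ = 1 := by rw [hAinv]; exact mul_eq_one_comm.mp hAu
  have hAiA : A⁻¹ * A = 1 := by rw [hAinv]; exact hAu
  have hBBi : B * B⁻¹ = 1 := by rw [hBinv]; exact mul_eq_one_comm.mp hBu
  have hBiB : B⁻¹ * B = 1 := by rw [hBinv]; exact hBu
  -- commutation relation
  have h1 : B * A = ζ • (A * B) := by
    have e : B * A * B⁻¹ * A⁻¹ * (A * B) = ζ • (A * B) := by
      rw [hcomm, Matrix.smul_mul, Matrix.one_mul]
    calc B * A = B * A * B⁻¹ * A⁻¹ * (A * B) := by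
          rw [Matrix.mul_assoc (B * A * B⁻¹) A⁻¹, ← Matrix.mul_assoc A⁻¹ A B, hAiA,
            Matrix.one_mul, Matrix.mul_assoc (B * A) B⁻¹ B, hBiB, Matrix.mul_one]
      _ = ζ • (A * B) := e
  -- trace facts
  have htB : B.trace = 0 := by
    have hB : B = ζ • (A * B * A⁻¹) := by
      calc B = B * A * A⁻¹ := by rw [Matrix.mul_assoc, hAAi, Matrix.mul_one]
        _ = ζ • (A * B * A⁻¹) := by rw [h1, Matrix.smul_mul]
    have ht : (A * B * A⁻¹).trace = B.trace := by
      rw [Matrix.trace_mul_comm (A * B) A⁻¹, ← Matrix.mul_assoc, hAiA, Matrix.one_mul]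
    have := congrArg Matrix.trace hB
    rw [Matrix.trace_smul, ht, smul_eq_mul] at this
    have h2 : (ζ - 1) * B.trace = 0 := by linear_combination -this
    rcases mul_eq_zero.mp h2 with h | h
    · exact absurd (by linear_combination h) hζne1
    · exact h
  have htB2 : (B * B).trace = 0 := by
    have hBB : B * B = (ζ^2) • (A * (B * B) * A⁻¹) := by
      have e1 : B * B * A = (ζ^2) • (A * (B * B)) := by
        calc B * B * A = B * (B * A) := by rw [Matrix.mul_assoc]
          _ = ζ • (B * (A * B)) := by rw [h1, Matrix.mul_smul]
          _ = ζ • ((B * A) * B) := by rw [Matrix.mul_assoc]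
          _ = ζ • ((ζ • (A * B)) * B) := by rw [h1]
          _ = (ζ^2) • (A * (B * B)) := by
              rw [Matrix.smul_mul, smul_smul, Matrix.mul_assoc]; ring_nf
      calc B * B = B * B * A * A⁻¹ := by rw [Matrix.mul_assoc, hAAi, Matrix.mul_one]
        _ = (ζ^2) • (A * (B * B) * A⁻¹) := by rw [e1, Matrix.smul_mul]
    have ht : (A * (B * B) * A⁻¹).trace = (B * B).trace := by
      rw [Matrix.trace_mul_comm (A * (B * B)) A⁻¹, ← Matrix.mul_assoc, hAiA, Matrix.one_mul]
    have := congrArg Matrix.trace hBB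
    rw [Matrix.trace_smul, ht, smul_eq_mul] at this
    have h2 : (ζ^2 - 1) * (B * B).trace = 0 := by linear_combination -this
    rcases mul_eq_zero.mp h2 with h | h
    · exact absurd (by linear_combination h) hζ2ne1
    · exact h
  -- det (B - 1) = 0
  have hdet : (B - 1).det = 0 := by
    rw [Matrix.det_fin_three] at hBd ⊢
    rw [Matrix.trace_fin_three] at htB htB2
    simp only [Matrix.mul_apply, Fin.sum_univ_three] at htB2
    simp only [Matrix.sub_apply, Matrix.one_apply_eq, Matrix.one_apply_ne, ne_eq,
      Fin.ext_iff, Matrix.one_apply] at *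
    norm_num
    linear_combination hBd + (1 - (B 0 0 + B 1 1 + B 2 2)/2) * htB + htB2/2
  obtain ⟨w, hw0, hw⟩ := (Matrix.exists_mulVec_eq_zero_iff.mpr hdet)
  have hBw : B *ᵥ w = w := by
    have := hw
    rw [Matrix.sub_mulVec, Matrix.one_mulVec, sub_eq_zero] at this
    exact this
  -- normalization
  set s : ℝ := ∑ i, Complex.normSq (w i) with hs
  have hspos : 0 < s := by
    have : ∃ i, w i ≠ 0 := by
      by_contra h
      push_neg at h
      exact hw0 (funext h)
    obtain ⟨i, hi⟩ := this
    exact Finset.sum_pos' (fun j _ => Complex.normSq_nonneg _)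
      ⟨i, Finset.mem_univ i, Complex.normSq_pos.mpr hi⟩
  set r : ℝ := Real.sqrt s with hr
  have hrpos : 0 < r := Real.sqrt_pos.mpr hspos
  set u : Fin 3 → ℂ := ((r : ℂ))⁻¹ • w with hu
  have hBu' : B *ᵥ u = u := by rw [hu, Matrix.mulVec_smul, hBw]
  have n0 : star u ⬝ᵥ u = 1 := by
    have hsum : ∑ i, star (w i) * w i = (s : ℂ) := by
      rw [hs]
      push_cast
      refine Finset.sum_congr rfl fun i _ => ?_
      rw [Complex.normSq_eq_conj_mul_self]
      rfl
    have hrr : (r : ℂ) * (r : ℂ) = (s : ℂ) := by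
      rw [hr]; push_cast [← Complex.ofReal_mul]
      norm_cast
      exact Real.mul_self_sqrt hspos.le
    have hrne : (r : ℂ) ≠ 0 := by
      simp [Complex.ofReal_ne_zero]
      exact hrpos.ne'
    rw [hu]
    simp only [dotProduct, Pi.smul_apply, smul_eq_mul]
    have hstar2 : ∀ i, star ((r:ℂ)⁻¹ * w i) = (r:ℂ)⁻¹ * star (w i) := by
      intro i; rw [star_mul', star_inv₀, Complex.star_def, Complex.conj_ofReal]
    calc ∑ i, star ((r:ℂ)⁻¹ * w i) * ((r:ℂ)⁻¹ * w i)
        = ((r:ℂ))⁻¹ * ((r:ℂ))⁻¹ * ∑ i, star (w i) * w i := by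
          rw [Finset.mul_sum]; refine Finset.sum_congr rfl fun i _ => ?_; rw [hstar2]; ring
      _ = 1 := by
          rw [hsum, ← hrr]; field_simp
  set v : Fin 3 → Fin 3 → ℂ := ![u, A *ᵥ u, A *ᵥ (A *ᵥ u)] with hv
  have hv0 : v 0 = u := rfl
  have hv1 : v 1 = A *ᵥ v 0 := rfl
  have hv2 : v 2 = A *ᵥ v 1 := rfl
  set v3 : Fin 3 → ℂ := A *ᵥ v 2 with hv3
  -- eigen equations
  have hswap : ∀ x : Fin 3 → ℂ, B *ᵥ (A *ᵥ x) = ζ • (A *ᵥ (B *ᵥ x)) := by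
    intro x
    rw [Matrix.mulVec_mulVec, Matrix.mulVec_mulVec, h1, Matrix.smul_mulVec]
  have e0 : B *ᵥ v 0 = (1:ℂ) • v 0 := by rw [hv0, hBu', one_smul]
  have e1 : B *ᵥ v 1 = ζ • v 1 := by rw [hv1, hswap, hv0, hBu']
  have e2 : B *ᵥ v 2 = ζ^2 • v 2 := by
    rw [hv2, hswap, e1, Matrix.mulVec_smul, smul_smul, ← sq]
  have e3 : B *ᵥ v3 = (1:ℂ) • v3 := by
    rw [hv3, hswap, e2, Matrix.mulVec_smul, smul_smul, one_smul]
    rw [show ζ * ζ^2 = ζ^3 by ring, hζ3, one_smul]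
  -- ip preservation by A
  have ipA := ip_unitary A hAu
  -- norms
  have n1 : star (v 1) ⬝ᵥ v 1 = 1 := by rw [hv1, ipA, hv0]; exact n0
  have n2 : star (v 2) ⬝ᵥ v 2 = 1 := by rw [hv2, ipA]; exact n1
  -- orthogonality
  have hzz : star ζ * ζ^2 = ζ := by rw [hζstar]; linear_combination ζ * hζ3
  have hζ2star : star (ζ^2) = ζ := by rw [star_pow, hζstar]; linear_combination ζ * hζ3
  have o01 : star (v 0) ⬝ᵥ v 1 = 0 :=
    ip_orth B hBu _ _ _ _ e0 e1 (by rw [star_one, one_mul]; exact hζne1)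
  have o02 : star (v 0) ⬝ᵥ v 2 = 0 :=
    ip_orth B hBu _ _ _ _ e0 e2 (by rw [star_one, one_mul]; exact hζ2ne1)
  have o10 : star (v 1) ⬝ᵥ v 0 = 0 :=
    ip_orth B hBu _ _ _ _ e1 e0 (by rw [hζstar, mul_one]; exact hζ2ne1)
  have o12 : star (v 1) ⬝ᵥ v 2 = 0 :=
    ip_orth B hBu _ _ _ _ e1 e2 (by rw [hzz]; exact hζne1)
  have o20 : star (v 2) ⬝ᵥ v 0 = 0 :=
    ip_orth B hBu _ _ _ _ e2 e0 (by rw [hζ2star, mul_one]; exact hζne1)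
  have o21 : star (v 2) ⬝ᵥ v 1 = 0 :=
    ip_orth B hBu _ _ _ _ e2 e1 (by
      rw [hζ2star]
      intro h
      exact hζ2ne1 (by linear_combination h))
  have o13 : star (v 1) ⬝ᵥ v3 = 0 :=
    ip_orth B hBu _ _ _ _ e1 e3 (by rw [hζstar, mul_one]; exact hζ2ne1)
  have o23 : star (v 2) ⬝ᵥ v3 = 0 :=
    ip_orth B hBu _ _ _ _ e2 e3 (by rw [hζ2star, mul_one]; exact hζne1)
  -- the matrix S with rows star (v j)
  set S : Matrix (Fin 3) (Fin 3) ℂ := Matrix.of (fun j i => star (v j i)) with hS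
  have n0' : star (v 0) ⬝ᵥ v 0 = 1 := by rw [hv0]; exact n0
  have keyI : ∀ j k, (S * Sᴴ) j k = star (v j) ⬝ᵥ (v k) := by
    intro j k
    have h := sandwich_apply v 1 j k
    rwa [Matrix.mul_one, Matrix.one_mulVec] at h
  have keyA : ∀ j k, (S * A * Sᴴ) j k = star (v j) ⬝ᵥ (A *ᵥ v k) := sandwich_apply v A
  have keyB : ∀ j k, (S * B * Sᴴ) j k = star (v j) ⬝ᵥ (B *ᵥ v k) := sandwich_apply v B
  -- S is unitary
  have hSS : S * Sᴴ = 1 := by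
    rw [Matrix.eta_fin_three (S * Sᴴ), keyI, keyI, keyI, keyI, keyI, keyI, keyI, keyI, keyI,
      n0', n1, n2, o01, o02, o10, o12, o20, o21]
    rw [Matrix.one_fin_three]
  set μ : ℂ := star (v 0) ⬝ᵥ v3 with hμdef
  have hAS : S * A * Sᴴ = !![0, 0, μ; 1, 0, 0; 0, 1, 0] := by
    have m00 : (S * A * Sᴴ) 0 0 = 0 := by rw [keyA, ← hv1]; exact o01
    have m01 : (S * A * Sᴴ) 0 1 = 0 := by rw [keyA, ← hv2]; exact o02
    have m02 : (S * A * Sᴴ) 0 2 = μ := by rw [keyA, ← hv3]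
    have m10 : (S * A * Sᴴ) 1 0 = 1 := by rw [keyA, ← hv1]; exact n1
    have m11 : (S * A * Sᴴ) 1 1 = 0 := by rw [keyA, ← hv2]; exact o12
    have m12 : (S * A * Sᴴ) 1 2 = 0 := by rw [keyA, ← hv3]; exact o13
    have m20 : (S * A * Sᴴ) 2 0 = 0 := by rw [keyA, ← hv1]; exact o21
    have m21 : (S * A * Sᴴ) 2 1 = 1 := by rw [keyA, ← hv2]; exact n2
    have m22 : (S * A * Sᴴ) 2 2 = 0 := by rw [keyA, ← hv3]; exact o23
    rw [Matrix.eta_fin_three (S * A * Sᴴ), m00, m01, m02, m10, m11, m12, m20, m21, m22]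
  have hBS : S * B * Sᴴ = !![1, 0, 0; 0, ζ, 0; 0, 0, ζ ^ 2] := by
    have b00 : (S * B * Sᴴ) 0 0 = 1 := by rw [keyB, e0, one_smul]; exact n0'
    have b01 : (S * B * Sᴴ) 0 1 = 0 := by
      rw [keyB, e1, dotProduct_smul, smul_eq_mul, o01, mul_zero]
    have b02 : (S * B * Sᴴ) 0 2 = 0 := by
      rw [keyB, e2, dotProduct_smul, smul_eq_mul, o02, mul_zero]
    have b10 : (S * B * Sᴴ) 1 0 = 0 := by rw [keyB, e0, one_smul]; exact o10
    have b11 : (S * B * Sᴴ) 1 1 = ζ := by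
      rw [keyB, e1, dotProduct_smul, smul_eq_mul, n1, mul_one]
    have b12 : (S * B * Sᴴ) 1 2 = 0 := by
      rw [keyB, e2, dotProduct_smul, smul_eq_mul, o12, mul_zero]
    have b20 : (S * B * Sᴴ) 2 0 = 0 := by rw [keyB, e0, one_smul]; exact o20
    have b21 : (S * B * Sᴴ) 2 1 = 0 := by
      rw [keyB, e1, dotProduct_smul, smul_eq_mul, o21, mul_zero]
    have b22 : (S * B * Sᴴ) 2 2 = ζ ^ 2 := by
      rw [keyB, e2, dotProduct_smul, smul_eq_mul, n2, mul_one]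
    rw [Matrix.eta_fin_three (S * B * Sᴴ), b00, b01, b02, b10, b11, b12, b20, b21, b22]
  -- determinant of S
  have hdd : S.det * star S.det = 1 := by
    have h := congrArg Matrix.det hSS
    rwa [Matrix.det_mul, Matrix.det_conjTranspose, Matrix.det_one] at h
  -- μ = 1
  have hμ : μ = 1 := by
    have hd1 : (S * A * Sᴴ).det = 1 := by
      rw [Matrix.det_mul, Matrix.det_mul, hAd, mul_one, Matrix.det_conjTranspose]
      exact hdd
    rw [hAS, Matrix.det_fin_three] at hd1
    simp at hd1
    linear_combination hd1
  rw [hμ] at hAS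
  -- cube root scaling
  obtain ⟨c, hc⟩ := IsAlgClosed.exists_pow_nat_eq S.det (n := 3) (by norm_num)
  have hcc : c * star c = 1 := by
    have h3 : (c * star c) ^ 3 = 1 := by
      rw [mul_pow, ← star_pow, hc]; exact hdd
    have hre : c * star c = (Complex.normSq c : ℂ) := by
      rw [mul_comm, Complex.normSq_eq_conj_mul_self]; rfl
    rw [hre] at h3 ⊢
    norm_cast at h3 ⊢
    nlinarith [Complex.normSq_nonneg c, sq_nonneg (Complex.normSq c - 1),
      sq_nonneg (Complex.normSq c + 1)]
  have hcc' : star c * c = 1 := by rw [mul_comm]; exact hcc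
  have hPPH : ((star c) • S) * ((star c) • S)ᴴ = 1 := by
    rw [Matrix.conjTranspose_smul, star_star, Matrix.smul_mul, Matrix.mul_smul, smul_smul,
      hcc', hSS, one_smul]
  have hPinv : ((star c) • S)⁻¹ = ((star c) • S)ᴴ := Matrix.inv_eq_right_inv hPPH
  refine ⟨(star c) • S, ?_, ?_, ?_, ?_⟩
  · rw [Matrix.conjTranspose_smul, star_star, Matrix.smul_mul, Matrix.mul_smul, smul_smul,
      hcc, mul_eq_one_comm.mp hSS, one_smul]
  · rw [Matrix.det_smul]
    simp only [Fintype.card_fin]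
    rw [← star_pow, hc]
    linear_combination hdd
  · rw [hPinv, Matrix.conjTranspose_smul, star_star, Matrix.smul_mul, Matrix.smul_mul,
      Matrix.mul_smul, smul_smul, hcc', one_smul, hAS]
  · rw [hPinv, Matrix.conjTranspose_smul, star_star, Matrix.smul_mul, Matrix.smul_mul,
      Matrix.mul_smul, smul_smul, hcc', one_smul, hBS]
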